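/- Let β ∈ [0,∞), γ ∈ (0,1], f ∈ H, and let (x_i)_{i≥1} be a weak β-greedy sequence for f with parameter γ. Then for every n ≥ 1: (∏_{i=n+1}^{2n} ‖r_i‖_∞)^{1/n} ≤ γ^{−1} · n^{−min(β,1)/2} · ‖r_{n+1}‖_H · (∏_{i=n+1}^{2n} P_{X_i}(x_{i+1})^{1/max(β,1)})^{1/n}. -/

import Mathlib

open scoped RealInnerProductSpace

variable {H : Type*} [NormedAddCommGroup H] [InnerProductSpace ℝ H] {Ω : Type*}

/-- The kernel interpolant `I_X f`: the orthogonal projection of `f` onto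
`V(X) = span {Φ(x) : x ∈ X}`. -/
noncomputable def interp (Φ : Ω → H) (X : Finset Ω) (f : H) : H :=
  haveI : FiniteDimensional ℝ (Submodule.span ℝ (Φ '' (X : Set Ω))) :=
    FiniteDimensional.span_of_finite ℝ (X.finite_toSet.image Φ)
  (Submodule.orthogonalProjectionOnto (Submodule.span ℝ (Φ '' (X : Set Ω))) f : H)

/-- The power function `P_X(z) = ‖Φ(z) − Π_{V(X)} Φ(z)‖`. -/
noncomputable def powerFun (Φ : Ω → H) (X : Finset Ω) (z : Ω) : ℝ :=
  ‖Φ z - interp Φ X (Φ z)‖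

/-- The sup norm `‖g‖_∞ = sup_{x ∈ Ω} |g(x)|`, where `g(x) = ⟪g, Φ(x)⟫`. -/
noncomputable def supNorm (Φ : Ω → H) (g : H) : ℝ := ⨆ x : Ω, |⟪g, Φ x⟫|

/-- `X_i = {x_1, …, x_i}` (so `X_0 = ∅`). -/
noncomputable def Xset (x : ℕ → Ω) (i : ℕ) : Finset Ω := by
  classical exact (Finset.Icc 1 i).image x

/-- `(x_i)_{i ≥ 1}` is a weak β-greedy sequence for `f` with parameter `γ`:
for every `i ≥ 0` and `z ∈ Ω`,
`γ · |r_i(z)|^β · P_{X_i}(z)^{1−β} ≤ |r_i(x_{i+1})|^β · P_{X_i}(x_{i+1})^{1−β}`,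
where `r_i = f − I_{X_i} f`. -/
def IsWeakGreedy (Φ : Ω → H) (f : H) (β γ : ℝ) (x : ℕ → Ω) : Prop :=
  ∀ (i : ℕ) (z : Ω),
    γ * |⟪f - interp Φ (Xset x i) f, Φ z⟫| ^ β * powerFun Φ (Xset x i) z ^ (1 - β)
      ≤ |⟪f - interp Φ (Xset x i) f, Φ (x (i + 1))⟫| ^ β
          * powerFun Φ (Xset x i) (x (i + 1)) ^ (1 - β)

/-!
Write `r_i = f - I_{X_i} f`, `p_i = P_{X_i}(x_{i+1})` and `c_i = |r_i(x_{i+1})| / p_i`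
(`greedyRatio`). Enlarging `V(X_i)` by `Φ(x_{i+1}) - I_{X_i} Φ(x_{i+1})`, a vector of norm `p_i`,
lowers `‖r_i‖²` by at least `c_i²`, so `∑_{n < i ≤ 2n} c_i² ≤ ‖r_{n+1}‖²` and by AM-GM the
geometric mean of these `c_i` is at most `‖r_{n+1}‖ / √n`. On the other hand the selection rule,
together with `|r_i(z)| ≤ ‖r_i‖ P_{X_i}(z)` and `P_{X_i} ≤ 1`, gives
`‖r_i‖_∞ ≤ γ⁻¹ ‖r_{n+1}‖^{1 - min(β,1)} c_i^{min(β,1)} p_i^{1/max(β,1)}`; take geometric means.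
-/

section Projection

variable {E : Type*} [NormedAddCommGroup E] [InnerProductSpace ℝ E]

theorem Submodule.norm_sub_starProjection_le_norm_sub {K : Submodule ℝ E}
    [K.HasOrthogonalProjection] (f : E) {v : E} (hv : v ∈ K) :
    ‖f - K.starProjection f‖ ≤ ‖f - v‖ := by
  rw [Submodule.starProjection_minimal]
  exact ciInf_le ⟨0, Set.forall_mem_range.2 fun _ => norm_nonneg _⟩ (⟨v, hv⟩ : K)

theorem norm_sub_inner_div_smul_sq (r q : E) :
    ‖r - (⟪r, q⟫ / ‖q‖ ^ 2) • q‖ ^ 2 = ‖r‖ ^ 2 - (⟪r, q⟫ / ‖q‖) ^ 2 := by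
  rcases eq_or_ne q 0 with rfl | hq
  · simp
  have hq' : ‖q‖ ≠ 0 := norm_ne_zero_iff.2 hq
  rw [norm_sub_sq_real, norm_smul, real_inner_smul_right, Real.norm_eq_abs, mul_pow, sq_abs]
  field_simp
  ring

theorem Submodule.norm_sub_starProjection_sq_add_sq_le {K L : Submodule ℝ E}
    [K.HasOrthogonalProjection] [L.HasOrthogonalProjection] (hKL : K ≤ L) (f : E) {q : E}
    (hq : q ∈ L) :
    ‖f - L.starProjection f‖ ^ 2 + (⟪f - K.starProjection f, q⟫ / ‖q‖) ^ 2
      ≤ ‖f - K.starProjection f‖ ^ 2 := by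
  set t := ⟪f - K.starProjection f, q⟫ / ‖q‖ ^ 2
  have hmem : K.starProjection f + t • q ∈ L :=
    L.add_mem (hKL (K.starProjection_apply_mem f)) (L.smul_mem t hq)
  have hmin := L.norm_sub_starProjection_le_norm_sub f hmem
  rw [← sub_sub] at hmin
  have := norm_sub_inner_div_smul_sq (f - K.starProjection f) q
  nlinarith [norm_nonneg (f - L.starProjection f)]

end Projection

namespace Real

theorem rpow_mul_rpow_one_sub {a p : ℝ} (ha : 0 ≤ a) (hp : 0 ≤ p) (hap : p = 0 → a = 0)
    (β : ℝ) : a ^ β * p ^ (1 - β) = (a / p) ^ β * p := by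
  rcases hp.eq_or_lt with rfl | hp
  · rw [hap rfl, ← rpow_add' le_rfl (by norm_num), add_sub_cancel, rpow_one, mul_zero]
  rw [div_rpow ha hp.le, rpow_sub hp, rpow_one]
  field_simp

theorem prod_rpow_one_div_card_le_sqrt {ι : Type*} {s : Finset ι} (hs : s.Nonempty)
    {c : ι → ℝ} (hc : ∀ i ∈ s, 0 ≤ c i) {B : ℝ} (hB : ∑ i ∈ s, c i ^ 2 ≤ B) :
    (∏ i ∈ s, c i) ^ (1 / (s.card : ℝ)) ≤ √(B / s.card) := by
  have amgm := geom_mean_le_arith_mean s (fun _ => 1) (fun i => c i ^ 2)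
    (fun _ _ => zero_le_one) (by simpa using hs) (fun i _ => sq_nonneg _)
  simp only [rpow_one, Finset.sum_const, nsmul_eq_mul, mul_one, one_mul] at amgm
  apply le_sqrt_of_sq_le
  calc ((∏ i ∈ s, c i) ^ (1 / (s.card : ℝ))) ^ 2
      = (∏ i ∈ s, c i ^ 2) ^ ((s.card : ℝ))⁻¹ := by
        rw [Finset.prod_pow, ← rpow_natCast, ← rpow_natCast, ← rpow_mul (Finset.prod_nonneg hc),
          ← rpow_mul (Finset.prod_nonneg hc), one_div, mul_comm]
    _ ≤ (∑ i ∈ s, c i ^ 2) / s.card := amgm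
    _ ≤ B / s.card := by gcongr

theorem prod_rpow_one_div_card_le_of_le_mul {ι : Type*} {s : Finset ι} (hs : s.Nonempty)
    {S c p : ι → ℝ} {A m : ℝ} (hS : ∀ i ∈ s, 0 ≤ S i) (hc : ∀ i ∈ s, 0 ≤ c i)
    (hp : ∀ i ∈ s, 0 ≤ p i) (hA : 0 ≤ A) (hle : ∀ i ∈ s, S i ≤ A * c i ^ m * p i) :
    (∏ i ∈ s, S i) ^ (1 / (s.card : ℝ))
      ≤ A * ((∏ i ∈ s, c i) ^ (1 / (s.card : ℝ))) ^ m * (∏ i ∈ s, p i) ^ (1 / (s.card : ℝ)) := by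
  have hC := Finset.prod_nonneg hc
  calc (∏ i ∈ s, S i) ^ (1 / (s.card : ℝ))
      ≤ ((A ^ s.card * (∏ i ∈ s, c i) ^ m) * ∏ i ∈ s, p i) ^ (1 / (s.card : ℝ)) := by
        rw [← finsetProd_rpow s c hc, ← Finset.prod_const, ← Finset.prod_mul_distrib,
          ← Finset.prod_mul_distrib]
        exact rpow_le_rpow (Finset.prod_nonneg hS) (Finset.prod_le_prod hS hle) (by positivity)
    _ = A * ((∏ i ∈ s, c i) ^ (1 / (s.card : ℝ))) ^ m * (∏ i ∈ s, p i) ^ (1 / (s.card : ℝ)) := by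
        rw [mul_rpow (by positivity) (Finset.prod_nonneg hp), mul_rpow (by positivity)
          (by positivity), one_div, pow_rpow_inv_natCast hA hs.card_pos.ne', ← rpow_mul hC,
          ← rpow_mul hC, mul_comm m]

end Real

section GreedyInequality

open Real

theorem le_of_greedy_of_le_one {t P R N c p γ β : ℝ} (ht : 0 ≤ t) (hP : 0 ≤ P)
    (htP : t ≤ R * P) (hR : 0 ≤ R) (hRN : R ≤ N) (hγ : 0 < γ) (hβ1 : β ≤ 1)
    (greedy : γ * t ^ β * P ^ (1 - β) ≤ c ^ β * p) :
    t ≤ γ⁻¹ * N ^ (1 - β) * c ^ β * p := by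
  have hRP : t ^ (1 - β) ≤ R ^ (1 - β) * P ^ (1 - β) := by
    rw [← mul_rpow hR hP]
    exact rpow_le_rpow ht htP (by linarith)
  have hgreedy : t ^ β * P ^ (1 - β) ≤ γ⁻¹ * (c ^ β * p) := by
    rw [le_inv_mul_iff₀ hγ, ← mul_assoc]
    exact greedy
  calc t = t ^ β * t ^ (1 - β) := by rw [← rpow_add' ht (by norm_num), add_sub_cancel, rpow_one]
    _ ≤ t ^ β * (R ^ (1 - β) * P ^ (1 - β)) := by gcongr
    _ = R ^ (1 - β) * (t ^ β * P ^ (1 - β)) := by ring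
    _ ≤ N ^ (1 - β) * (γ⁻¹ * (c ^ β * p)) := by
        have hRN' : R ^ (1 - β) ≤ N ^ (1 - β) := rpow_le_rpow hR hRN (by linarith)
        exact mul_le_mul hRN' hgreedy (by positivity) (rpow_nonneg (hR.trans hRN) _)
    _ = γ⁻¹ * N ^ (1 - β) * c ^ β * p := by ring

theorem le_of_greedy_of_one_le {t P c p γ β : ℝ} (ht : 0 ≤ t) (hP1 : P ≤ 1)
    (hP : t = 0 ∨ 0 < P) (hc : 0 ≤ c) (hp : 0 ≤ p) (hγ0 : 0 < γ) (hγ1 : γ ≤ 1) (hβ1 : 1 ≤ β)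
    (greedy : γ * t ^ β * P ^ (1 - β) ≤ c ^ β * p) :
    t ≤ γ⁻¹ * c * p ^ (1 / β) := by
  rcases hP with rfl | hP
  · positivity
  have hβ : 0 < β := by linarith
  have hPow : 1 ≤ P ^ (1 - β) := one_le_rpow_of_pos_of_le_one_of_nonpos hP hP1 (by linarith)
  have hγβ : γ⁻¹ ≤ γ⁻¹ ^ β := by
    simpa using rpow_le_rpow_of_exponent_le ((one_le_inv₀ hγ0).2 hγ1) hβ1
  rw [← rpow_le_rpow_iff ht (by positivity) hβ, mul_rpow (by positivity) (by positivity),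
    mul_rpow (by positivity) hc, ← rpow_mul hp, one_div, inv_mul_cancel₀ hβ.ne', rpow_one]
  calc t ^ β ≤ γ⁻¹ * (c ^ β * p) := by
        rw [le_inv_mul_iff₀ hγ0]
        calc γ * t ^ β ≤ γ * t ^ β * P ^ (1 - β) := le_mul_of_one_le_right (by positivity) hPow
          _ ≤ c ^ β * p := greedy
    _ ≤ γ⁻¹ ^ β * (c ^ β * p) := by gcongr
    _ = γ⁻¹ ^ β * c ^ β * p := by ring

end GreedyInequality

instance (Φ : Ω → H) (X : Finset Ω) :
    FiniteDimensional ℝ (Submodule.span ℝ (Φ '' (X : Set Ω))) :=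
  FiniteDimensional.span_of_finite ℝ (X.finite_toSet.image Φ)

section Kernel

variable (Φ : Ω → H)

theorem interp_eq_starProjection (X : Finset Ω) (f : H) :
    interp Φ X f = (Submodule.span ℝ (Φ '' (X : Set Ω))).starProjection f :=
  rfl

theorem span_image_mono {X Y : Finset Ω} (hXY : X ⊆ Y) :
    Submodule.span ℝ (Φ '' (X : Set Ω)) ≤ Submodule.span ℝ (Φ '' (Y : Set Ω)) :=
  Submodule.span_mono (Set.image_mono hXY)

theorem norm_sub_interp_anti {X Y : Finset Ω} (hXY : X ⊆ Y) (f : H) :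
    ‖f - interp Φ Y f‖ ≤ ‖f - interp Φ X f‖ :=
  Submodule.norm_sub_starProjection_le_norm_sub f
    (span_image_mono Φ hXY (Submodule.starProjection_apply_mem _ f))

theorem supNorm_nonneg (g : H) : 0 ≤ supNorm Φ g :=
  Real.iSup_nonneg fun _ => abs_nonneg _

theorem powerFun_nonneg (X : Finset Ω) (z : Ω) : 0 ≤ powerFun Φ X z :=
  norm_nonneg _

theorem powerFun_le_norm (X : Finset Ω) (z : Ω) : powerFun Φ X z ≤ ‖Φ z‖ := by
  rw [powerFun, interp_eq_starProjection]
  simpa using Submodule.norm_sub_starProjection_le_norm_sub (Φ z) (Submodule.zero_mem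
    (Submodule.span ℝ (Φ '' (X : Set Ω))))

theorem inner_sub_interp_eq (X : Finset Ω) (f : H) (z : Ω) :
    ⟪f - interp Φ X f, Φ z⟫ = ⟪f - interp Φ X f, Φ z - interp Φ X (Φ z)⟫ := by
  simp only [interp_eq_starProjection]
  rw [inner_sub_right,
    Submodule.starProjection_inner_eq_zero _ _ (Submodule.starProjection_apply_mem _ _), sub_zero]

theorem abs_inner_sub_interp_le (X : Finset Ω) (f : H) (z : Ω) :
    |⟪f - interp Φ X f, Φ z⟫| ≤ ‖f - interp Φ X f‖ * powerFun Φ X z := by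
  rw [inner_sub_interp_eq]
  exact abs_real_inner_le_norm _ _

theorem inner_sub_interp_eq_zero_of_powerFun_eq_zero (X : Finset Ω) (f : H) {z : Ω}
    (hz : powerFun Φ X z = 0) : ⟪f - interp Φ X f, Φ z⟫ = 0 := by
  simpa [hz] using abs_inner_sub_interp_le Φ X f z

theorem norm_sub_interp_sq_add_sq_le {X Y : Finset Ω} (hXY : X ⊆ Y) (f : H) {w : Ω}
    (hw : w ∈ Y) :
    ‖f - interp Φ Y f‖ ^ 2 + (|⟪f - interp Φ X f, Φ w⟫| / powerFun Φ X w) ^ 2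
      ≤ ‖f - interp Φ X f‖ ^ 2 := by
  have hq : Φ w - interp Φ X (Φ w) ∈ Submodule.span ℝ (Φ '' (Y : Set Ω)) :=
    Submodule.sub_mem _ (Submodule.subset_span ⟨w, hw, rfl⟩)
      (span_image_mono Φ hXY (Submodule.starProjection_apply_mem _ _))
  rw [div_pow, sq_abs, ← div_pow, inner_sub_interp_eq, powerFun]
  exact Submodule.norm_sub_starProjection_sq_add_sq_le (span_image_mono Φ hXY) f hq

end Kernel

theorem Xset_mono (x : ℕ → Ω) : Monotone (Xset x) := by
  classical
  exact fun _ _ h => Finset.image_subset_image (Finset.Icc_subset_Icc_right h)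

theorem mem_Xset_succ (x : ℕ → Ω) (i : ℕ) : x (i + 1) ∈ Xset x (i + 1) := by
  classical
  exact Finset.mem_image_of_mem x (Finset.mem_Icc.2 ⟨by omega, le_rfl⟩)

noncomputable def greedyRatio (Φ : Ω → H) (f : H) (x : ℕ → Ω) (i : ℕ) : ℝ :=
  |⟪f - interp Φ (Xset x i) f, Φ (x (i + 1))⟫| / powerFun Φ (Xset x i) (x (i + 1))

theorem greedyRatio_nonneg (Φ : Ω → H) (f : H) (x : ℕ → Ω) (i : ℕ) :
    0 ≤ greedyRatio Φ f x i :=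
  div_nonneg (abs_nonneg _) (powerFun_nonneg Φ _ _)

theorem sum_greedyRatio_sq_le (Φ : Ω → H) (f : H) (x : ℕ → Ω) {m M : ℕ} (hmM : m ≤ M) :
    ∑ i ∈ Finset.Ico m M, greedyRatio Φ f x i ^ 2
      ≤ ‖f - interp Φ (Xset x m) f‖ ^ 2 - ‖f - interp Φ (Xset x M) f‖ ^ 2 := by
  have htelescope := Finset.sum_Ico_sub (fun i => -‖f - interp Φ (Xset x i) f‖ ^ 2) hmM
  simp only [sub_neg_eq_add, neg_add_eq_sub] at htelescope
  rw [← htelescope]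
  refine Finset.sum_le_sum fun i _ => ?_
  have := norm_sub_interp_sq_add_sq_le Φ (Xset_mono x i.le_succ) f (mem_Xset_succ x i)
  rw [greedyRatio]
  linarith

section WeakGreedy

variable {Φ : Ω → H} {f : H} {β γ : ℝ} {x : ℕ → Ω}

theorem greedy_le_greedyRatio_rpow_mul (hx : IsWeakGreedy Φ f β γ x) (i : ℕ) (z : Ω) :
    γ * |⟪f - interp Φ (Xset x i) f, Φ z⟫| ^ β * powerFun Φ (Xset x i) z ^ (1 - β)
      ≤ greedyRatio Φ f x i ^ β * powerFun Φ (Xset x i) (x (i + 1)) := by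
  rw [greedyRatio, ← Real.rpow_mul_rpow_one_sub (abs_nonneg _) (powerFun_nonneg Φ _ _)]
  · exact hx i z
  · intro hp
    rw [inner_sub_interp_eq_zero_of_powerFun_eq_zero Φ _ f hp, abs_zero]

theorem abs_inner_sub_interp_le_of_isWeakGreedy (hΦ : ∀ z : Ω, ‖Φ z‖ ≤ 1) (hγ0 : 0 < γ)
    (hγ1 : γ ≤ 1) (hx : IsWeakGreedy Φ f β γ x) (i : ℕ) {N : ℝ}
    (hN : ‖f - interp Φ (Xset x i) f‖ ≤ N) (z : Ω) :
    |⟪f - interp Φ (Xset x i) f, Φ z⟫|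
      ≤ γ⁻¹ * N ^ (1 - min β 1) * greedyRatio Φ f x i ^ (min β 1)
          * powerFun Φ (Xset x i) (x (i + 1)) ^ (1 / max β 1) := by
  have hgreedy := greedy_le_greedyRatio_rpow_mul hx i z
  rcases le_total β 1 with hβ1 | hβ1
  · rw [min_eq_left hβ1, max_eq_right hβ1, div_one, Real.rpow_one]
    exact le_of_greedy_of_le_one (abs_nonneg _) (powerFun_nonneg Φ _ _)
      (abs_inner_sub_interp_le Φ _ f z) (norm_nonneg _) hN hγ0 hβ1 hgreedy
  · rw [min_eq_right hβ1, max_eq_left hβ1, sub_self, Real.rpow_zero, mul_one, Real.rpow_one]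
    have hP : |⟪f - interp Φ (Xset x i) f, Φ z⟫| = 0 ∨ 0 < powerFun Φ (Xset x i) z := by
      refine (powerFun_nonneg Φ (Xset x i) z).eq_or_lt.imp (fun hP => ?_) id
      rw [inner_sub_interp_eq_zero_of_powerFun_eq_zero Φ _ f hP.symm, abs_zero]
    exact le_of_greedy_of_one_le (abs_nonneg _) ((powerFun_le_norm Φ _ z).trans (hΦ z)) hP
      (greedyRatio_nonneg Φ f x i) (powerFun_nonneg Φ _ _) hγ0 hγ1 hβ1 hgreedy

theorem supNorm_sub_interp_le_of_isWeakGreedy [Nonempty Ω] (hΦ : ∀ z : Ω, ‖Φ z‖ ≤ 1)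
    (hγ0 : 0 < γ) (hγ1 : γ ≤ 1) (hx : IsWeakGreedy Φ f β γ x) (i : ℕ) {N : ℝ}
    (hN : ‖f - interp Φ (Xset x i) f‖ ≤ N) :
    supNorm Φ (f - interp Φ (Xset x i) f)
      ≤ γ⁻¹ * N ^ (1 - min β 1) * greedyRatio Φ f x i ^ (min β 1)
          * powerFun Φ (Xset x i) (x (i + 1)) ^ (1 / max β 1) :=
  ciSup_le (abs_inner_sub_interp_le_of_isWeakGreedy hΦ hγ0 hγ1 hx i hN)

end WeakGreedy

theorem statement_5 [Nonempty Ω]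
    (Φ : Ω → H) (hΦ : ∀ z : Ω, ‖Φ z‖ ≤ 1)
    (β γ : ℝ) (hβ : 0 ≤ β) (hγ0 : 0 < γ) (hγ1 : γ ≤ 1)
    (f : H) (x : ℕ → Ω) (hx : IsWeakGreedy Φ f β γ x)
    (n : ℕ) (hn : 1 ≤ n) :
    (∏ i ∈ Finset.Icc (n + 1) (2 * n),
        supNorm Φ (f - interp Φ (Xset x i) f)) ^ (1 / (n : ℝ))
      ≤ γ⁻¹ * (n : ℝ) ^ (-(min β 1) / 2) * ‖f - interp Φ (Xset x (n + 1)) f‖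
          * (∏ i ∈ Finset.Icc (n + 1) (2 * n),
              powerFun Φ (Xset x i) (x (i + 1)) ^ (1 / max β 1)) ^ (1 / (n : ℝ)) := by
  set s := Finset.Icc (n + 1) (2 * n)
  set N := ‖f - interp Φ (Xset x (n + 1)) f‖
  have hs : s.Nonempty := Finset.nonempty_Icc.2 (by omega)
  have hcard : (s.card : ℝ) = n := by
    rw [Nat.card_Icc]
    norm_cast
    omega
  have hsum : ∑ i ∈ s, greedyRatio Φ f x i ^ 2 ≤ N ^ 2 := by
    have := sum_greedyRatio_sq_le Φ f x (show n + 1 ≤ 2 * n + 1 by omega)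
    rw [Finset.Ico_add_one_right_eq_Icc] at this
    linarith [sq_nonneg ‖f - interp Φ (Xset x (2 * n + 1)) f‖]
  have hgm := Real.prod_rpow_one_div_card_le_sqrt hs (fun i _ => greedyRatio_nonneg Φ f x i) hsum
  have hprod := Real.prod_rpow_one_div_card_le_of_le_mul hs (fun i _ => supNorm_nonneg Φ _)
    (fun i _ => greedyRatio_nonneg Φ f x i) (fun i _ => Real.rpow_nonneg (powerFun_nonneg Φ _ _) _)
    (by positivity : 0 ≤ γ⁻¹ * N ^ (1 - min β 1)) fun i hi =>
      supNorm_sub_interp_le_of_isWeakGreedy hΦ hγ0 hγ1 hx i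
        (norm_sub_interp_anti Φ (Xset_mono x (Finset.mem_Icc.1 hi).1) f)
  rw [hcard] at hgm hprod
  have hN : N ^ (1 - min β 1) * √(N ^ 2 / n) ^ min β 1 = (n : ℝ) ^ (-(min β 1) / 2) * N := by
    rw [Real.sqrt_div' _ (Nat.cast_nonneg n), Real.sqrt_sq (norm_nonneg _), Real.sqrt_eq_rpow,
      Real.div_rpow (norm_nonneg _) (by positivity), ← Real.rpow_mul (Nat.cast_nonneg n),
      neg_div, Real.rpow_neg (Nat.cast_nonneg n), div_eq_mul_inv, ← mul_assoc,
      ← Real.rpow_add' (norm_nonneg _) (by norm_num), sub_add_cancel, Real.rpow_one, mul_comm,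
      one_div_mul_eq_div]
  calc _ ≤ _ := hprod
    _ ≤ γ⁻¹ * N ^ (1 - min β 1) * √(N ^ 2 / n) ^ min β 1 * _ := by
        have hm : 0 ≤ min β 1 := le_min hβ zero_le_one
        gcongr
        · exact Real.rpow_nonneg
            (Finset.prod_nonneg fun i _ => Real.rpow_nonneg (powerFun_nonneg Φ _ _) _) _
        · exact Real.rpow_nonneg (Finset.prod_nonneg fun i _ => greedyRatio_nonneg Φ f x i) _
    _ = _ := by rw [mul_assoc γ⁻¹, hN]; ring
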